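/- For every even integer k ≥ 4 and every ε > 0 there exists a simple closed polygon with exactly k vertices in EuclideanSpace ℝ (Fin 3) whose total curvature Σ_{i=0}^{k−1} angle(v_{i+1} − v_i, v_{i+2} − v_{i+1}) (indices mod k) is strictly greater than kπ − ε. In other words, for even k the bound kπ for the total curvature of a piecewise geodesic Jordan curve with k vertices is sharp. -/

import Mathlib

open Real InnerProductGeometry

/-!
Take the zigzag `v j = (δ cos (2πj/k), δ sin (2πj/k), j mod 2)` on a thin cylinder over the
regular `k`-gon; the heights are well defined on `ZMod k` because `k` is even. At `δ = 0` it
degenerates to one vertical segment traversed back and forth, so every exterior angle is `π` and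
the total curvature is `kπ`. The angle is continuous at pairs of nonzero vectors, hence the total
curvature still exceeds `kπ - ε` for small `δ > 0`. For every `δ > 0` the polygon is simple: the
`i`-th edge lies in the vertical plane over the `i`-th side of the regular `k`-gon, and all other
vertices lie strictly on one side of that plane.
-/

/-- A closed polygon with vertices `v i` (indices cyclic, consecutive vertices distinct)
is simple (a piecewise geodesic Jordan curve) if any two consecutive edges meet exactly
in their common vertex and any two non-consecutive edges are disjoint. -/
def IsSimpleClosedPolygon {k n : ℕ} (v : ZMod k → EuclideanSpace ℝ (Fin n)) : Prop :=
  (∀ i, v (i + 1) ≠ v i) ∧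
  (∀ i, segment ℝ (v i) (v (i + 1)) ∩ segment ℝ (v (i + 1)) (v (i + 2)) = {v (i + 1)}) ∧
  (∀ i j, i ≠ j → i + 1 ≠ j → i ≠ j + 1 →
    Disjoint (segment ℝ (v i) (v (i + 1))) (segment ℝ (v j) (v (j + 1))))

open RealInnerProductSpace

section Segment

variable {E : Type*} [NormedAddCommGroup E] [InnerProductSpace ℝ E] {u p q x : E}

theorem inner_eq_of_mem_segment (hx : x ∈ segment ℝ p q) (hq : ⟪u, q⟫ = ⟪u, p⟫) :
    ⟪u, x⟫ = ⟪u, p⟫ :=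
  (convex_hyperplane (innerₛₗ ℝ u).isLinear ⟪u, p⟫).segment_subset rfl hq hx

theorem inner_lt_of_mem_segment {c : ℝ} (hx : x ∈ segment ℝ p q) (hp : ⟪u, p⟫ < c)
    (hq : ⟪u, q⟫ < c) : ⟪u, x⟫ < c :=
  (convex_halfSpace_lt (innerₛₗ ℝ u).isLinear c).segment_subset hp hq hx

theorem eq_left_of_mem_segment_of_inner_eq (hx : x ∈ segment ℝ p q) (hq : ⟪u, q⟫ < ⟪u, p⟫)
    (hxp : ⟪u, x⟫ = ⟪u, p⟫) : x = p := by
  obtain ⟨a, b, -, -, hab, rfl⟩ := hx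
  obtain rfl : a = 1 - b := eq_sub_of_add_eq hab
  rw [inner_add_right, inner_smul_right, inner_smul_right] at hxp
  have hb : b * (⟪u, p⟫ - ⟪u, q⟫) = 0 := by linear_combination -hxp
  obtain rfl : b = 0 := (mul_eq_zero.1 hb).resolve_right (sub_ne_zero.2 hq.ne')
  simp

end Segment

theorem isSimpleClosedPolygon_of_supporting_hyperplanes {n k : ℕ} (hk : 3 ≤ k)
    (v u : ZMod k → EuclideanSpace ℝ (Fin n))
    (h_edge : ∀ i, ⟪u i, v (i + 1)⟫ = ⟪u i, v i⟫)
    (h_lt : ∀ i j, j ≠ i → j ≠ i + 1 → ⟪u i, v j⟫ < ⟪u i, v i⟫) :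
    IsSimpleClosedPolygon v := by
  have cast_ne_zero (m : ℕ) (hm0 : 0 < m) (hmk : m < k) : (m : ZMod k) ≠ 0 := by
    rw [Ne, ZMod.natCast_eq_zero_iff]
    exact fun h => absurd (Nat.le_of_dvd hm0 h) (by omega)
  have add_one_ne (i : ZMod k) : i + 1 ≠ i :=
    fun h => cast_ne_zero 1 one_pos (by omega) (by simpa using h)
  have add_two_ne (i : ZMod k) : i + 2 ≠ i :=
    fun h => cast_ne_zero 2 two_pos (by omega) (by simpa using h)
  have add_two_ne_add_one (i : ZMod k) : i + 2 ≠ i + 1 := by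
    rw [← one_add_one_eq_two, ← add_assoc]
    exact add_one_ne (i + 1)
  refine ⟨fun i h => ?_, fun i => ?_, fun i j hij hj hi => ?_⟩
  · have := h_lt (i + 1) i (add_one_ne i).symm
      (by rw [add_assoc, one_add_one_eq_two]; exact (add_two_ne i).symm)
    rw [h] at this
    exact lt_irrefl _ this
  · ext x
    refine ⟨fun ⟨hx, hx'⟩ => ?_, ?_⟩
    · refine eq_left_of_mem_segment_of_inner_eq (u := u i) hx' ?_ ?_
      · rw [h_edge]; exact h_lt i _ (add_two_ne i) (add_two_ne_add_one i)
      · rw [inner_eq_of_mem_segment hx (h_edge i), h_edge]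
    · rintro rfl
      exact ⟨right_mem_segment ℝ _ _, left_mem_segment ℝ _ _⟩
  · refine Set.disjoint_left.2 fun x hx hx' => (inner_lt_of_mem_segment hx' ?_ ?_).ne
      (inner_eq_of_mem_segment hx (h_edge i))
    · exact h_lt i j (Ne.symm hij) (Ne.symm hj)
    · exact h_lt i (j + 1) (Ne.symm hi) fun h => hij (add_right_cancel h).symm

section Curvature

variable {E : Type*} [NormedAddCommGroup E] [InnerProductSpace ℝ E] {k : ℕ}

noncomputable def totalCurvature (v : ZMod k → E) : ℝ :=
  ∑ i ∈ Finset.range k,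
    angle (v ((i : ZMod k) + 1) - v (i : ZMod k)) (v ((i : ZMod k) + 2) - v ((i : ZMod k) + 1))

theorem totalCurvature_of_add_two_eq {v : ZMod k → E} (hv2 : ∀ i, v (i + 2) = v i)
    (hv1 : ∀ i, v (i + 1) ≠ v i) : totalCurvature v = k * π := by
  have hπ (i : ZMod k) : angle (v (i + 1) - v i) (v (i + 2) - v (i + 1)) = π := by
    rw [hv2 i, ← neg_sub (v (i + 1)) (v i)]
    exact angle_self_neg_of_nonzero (sub_ne_zero.2 (hv1 i))
  simp [totalCurvature, hπ]

theorem continuousAt_totalCurvature {X : Type*} [TopologicalSpace X] {v : X → ZMod k → E}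
    {x₀ : X} (hv : ∀ i, ContinuousAt (fun x => v x i) x₀) (hne : ∀ i, v x₀ (i + 1) ≠ v x₀ i) :
    ContinuousAt (fun x => totalCurvature (v x)) x₀ := by
  unfold ContinuousAt totalCurvature
  refine tendsto_finsetSum _ fun i _ => ?_
  have hne₂ : v x₀ ((i : ZMod k) + 2) ≠ v x₀ ((i : ZMod k) + 1) := by
    rw [← one_add_one_eq_two, ← add_assoc]
    exact hne _
  have hangle := continuousAt_angle (x := (_, _)) (sub_ne_zero.2 (hne i)) (sub_ne_zero.2 hne₂)
  have hedges : ContinuousAt (fun x => (v x ((i : ZMod k) + 1) - v x i,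
      v x ((i : ZMod k) + 2) - v x ((i : ZMod k) + 1))) x₀ :=
    ((hv _).sub (hv _)).prodMk ((hv _).sub (hv _))
  exact (hangle.comp_of_eq hedges rfl :)

end Curvature

theorem cos_two_mul_sub_one_mul_pi_div_lt {k b : ℕ} (hb : 2 ≤ b) (hbk : b < k) :
    cos ((2 * b - 1) * π / k) < cos (π / k) := by
  have hk : (0 : ℝ) < k := by exact_mod_cast (show 0 < k by omega)
  have hbk' : (b : ℝ) < k := by exact_mod_cast hbk
  have hb' : (2 : ℝ) ≤ b := by exact_mod_cast hb
  have hsin₁ : 0 < sin (b * π / k) := sin_pos_of_pos_of_lt_pi (by positivity) (by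
    rw [div_lt_iff₀ hk]; nlinarith [pi_pos])
  have hsin₂ : 0 < sin ((b - 1) * π / k) := sin_pos_of_pos_of_lt_pi
    (div_pos (mul_pos (by linarith) pi_pos) hk) (by rw [div_lt_iff₀ hk]; nlinarith [pi_pos])
  have := cos_sub_cos ((2 * b - 1) * π / k) (π / k)
  rw [show ((2 * b - 1) * π / k + π / k) / 2 = b * π / k by ring,
    show ((2 * b - 1) * π / k - π / k) / 2 = (b - 1) * π / k by ring] at this
  nlinarith [mul_pos hsin₁ hsin₂]

noncomputable section Zigzag

variable {k : ℕ}

def regularPolygon (k : ℕ) (j : ZMod k) : EuclideanSpace ℝ (Fin 3) :=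
  !₂[cos (2 * π * j.val / k), sin (2 * π * j.val / k), 0]

def edgeNormal (k : ℕ) (i : ZMod k) : EuclideanSpace ℝ (Fin 3) :=
  !₂[cos ((2 * i.val + 1) * π / k), sin ((2 * i.val + 1) * π / k), 0]

def zigzag (h : 2 ∣ k) (δ : ℝ) (j : ZMod k) : EuclideanSpace ℝ (Fin 3) :=
  δ • regularPolygon k j + !₂[0, 0, ((ZMod.castHom h (ZMod 2) j).val : ℝ)]

theorem ZMod.exists_val_sub_eq [NeZero k] (i j : ZMod k) :
    ∃ q : ℤ, ((j - i).val : ℤ) = j.val - i.val + q * k := by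
  refine ⟨-(((j.val : ℤ) - i.val) / k), ?_⟩
  have h : ((((j.val : ℤ) - i.val : ℤ) : ZMod k)) = j - i := by simp
  rw [← h, ZMod.val_intCast, Int.emod_def]
  ring

theorem inner_edgeNormal_zigzag [NeZero k] (h : 2 ∣ k) (δ : ℝ) (i j : ZMod k) :
    ⟪edgeNormal k i, zigzag h δ j⟫ = δ * cos ((2 * (j - i).val - 1) * π / k) := by
  have hk : (k : ℝ) ≠ 0 := NeZero.ne _
  obtain ⟨q, hq⟩ := ZMod.exists_val_sub_eq i j
  have hq' : ((j - i).val : ℝ) = j.val - i.val + q * k := by exact_mod_cast hq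
  have harg : (2 * (j - i).val - 1) * π / k =
      2 * π * j.val / k - (2 * i.val + 1) * π / k + q * (2 * π) := by
    rw [hq']; field_simp; ring
  rw [harg, cos_add_int_mul_two_pi, cos_sub]
  simp [zigzag, regularPolygon, edgeNormal, PiLp.inner_apply, Fin.sum_univ_three, -ZMod.natCast_val]
  ring

theorem inner_edgeNormal_zigzag_self [NeZero k] (h : 2 ∣ k) (δ : ℝ) (i : ZMod k) :
    ⟪edgeNormal k i, zigzag h δ i⟫ = δ * cos (π / k) := by
  rw [inner_edgeNormal_zigzag, sub_self, ZMod.val_zero, ← cos_neg]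
  congr 2
  push_cast
  ring

theorem isSimpleClosedPolygon_zigzag [NeZero k] (h : 2 ∣ k) (hk : 3 ≤ k) {δ : ℝ} (hδ : 0 < δ) :
    IsSimpleClosedPolygon (zigzag h δ) := by
  have val_one : (1 : ZMod k).val = 1 := by
    rw [ZMod.val_one_eq_one_mod, Nat.mod_eq_of_lt (by omega)]
  refine isSimpleClosedPolygon_of_supporting_hyperplanes hk _ (edgeNormal k) (fun i => ?_)
    fun i j hji hji₁ => ?_
  · rw [inner_edgeNormal_zigzag, inner_edgeNormal_zigzag_self, add_sub_cancel_left, val_one]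
    norm_num
  · rw [inner_edgeNormal_zigzag, inner_edgeNormal_zigzag_self]
    have hb₀ : (j - i).val ≠ 0 := by rwa [Ne, ZMod.val_eq_zero, sub_eq_zero]
    have hb₁ : (j - i).val ≠ 1 := by
      rwa [← val_one, Ne, ZMod.val_injective _ |>.eq_iff, sub_eq_iff_eq_add']
    exact mul_lt_mul_of_pos_left
      (cos_two_mul_sub_one_mul_pi_div_lt (by omega) (ZMod.val_lt _)) hδ

theorem continuous_zigzag (h : 2 ∣ k) (j : ZMod k) : Continuous fun δ => zigzag h δ j := by
  unfold zigzag; fun_prop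

theorem zigzag_zero (h : 2 ∣ k) (j : ZMod k) :
    zigzag h 0 j = !₂[0, 0, ((ZMod.castHom h (ZMod 2) j).val : ℝ)] := by
  rw [zigzag, zero_smul, zero_add]

theorem zigzag_zero_add_two (h : 2 ∣ k) (i : ZMod k) : zigzag h 0 (i + 2) = zigzag h 0 i := by
  have two_eq_zero : (2 : ZMod 2) = 0 := rfl
  rw [zigzag_zero, zigzag_zero, map_add, map_ofNat, two_eq_zero, add_zero]

theorem zigzag_zero_add_one_ne (h : 2 ∣ k) (i : ZMod k) : zigzag h 0 (i + 1) ≠ zigzag h 0 i := by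
  have val_add_one_ne : ∀ x : ZMod 2, (x + 1).val ≠ x.val := by decide
  intro hi
  have := congrArg (· 2) hi
  simp only [zigzag_zero, map_add, map_one, Matrix.cons_val, Nat.cast_inj] at this
  exact val_add_one_ne _ this

end Zigzag

/-- Sharpness of the bound `kπ` for even `k`: for every even `k ≥ 4` and every
`ε > 0` there is a piecewise geodesic Jordan curve with `k` vertices in `ℝ³` of
total curvature greater than `kπ - ε`. -/
theorem total_curvature_gamma_even_sharp (k : ℕ) (hk : 4 ≤ k) (hkeven : Even k)
    (ε : ℝ) (hε : 0 < ε) :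
    ∃ v : ZMod k → EuclideanSpace ℝ (Fin 3),
      IsSimpleClosedPolygon v ∧
      k * Real.pi - ε <
        ∑ i ∈ Finset.range k,
          angle (v ((i : ZMod k) + 1) - v (i : ZMod k))
            (v ((i : ZMod k) + 2) - v ((i : ZMod k) + 1)) := by
  have h2 : 2 ∣ k := hkeven.two_dvd
  have : NeZero k := ⟨by omega⟩
  have hcont := continuousAt_totalCurvature (fun i => (continuous_zigzag h2 i).continuousAt)
    (zigzag_zero_add_one_ne h2)
  rw [ContinuousAt, totalCurvature_of_add_two_eq (zigzag_zero_add_two h2)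
    (zigzag_zero_add_one_ne h2)] at hcont
  obtain ⟨δ, hδ, hcurv⟩ := (hcont.eventually (lt_mem_nhds (sub_lt_self _ hε))).exists_gt
  exact ⟨zigzag h2 δ, isSimpleClosedPolygon_zigzag h2 (by omega) hδ, hcurv⟩
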